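/- Basic inequality for penalized regression: suppose 2‖U‖_op < (1−c)ν₂ and 2‖X⊙U‖_op < (1−c)ν₁ for some c > 0, where Y = M⁰ + X⊙Θ⁰ + U. If (M̃, Θ̃) minimizes F(Θ, M) = ‖Y − M − X⊙Θ‖_F² + ν₂‖M‖_n + ν₁‖Θ‖_n, then with Δ₁ = M̃ − M⁰ and Δ₂ = Θ̃ − Θ⁰, one has ‖Δ₁ + X⊙Δ₂‖_F² + cν₂‖𝓟₁(Δ₁)‖_n + cν₁‖𝓟₂(Δ₂)‖_n ≤ (2−c)ν₂‖𝓜₁(Δ₁)‖_n + (2−c)ν₁‖𝓜₂(Δ₂)‖_n. -/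

import Mathlib

open Matrix BigOperators

/-- Squared Frobenius norm of a real matrix. -/
noncomputable def frobSq {m n : ℕ} (A : Matrix (Fin m) (Fin n) ℝ) : ℝ :=
  ∑ i, ∑ j, A i j ^ 2

/-- Singular values of a real matrix: square roots of the eigenvalues of `Aᴴ * A`. -/
noncomputable def singVals {m n : ℕ} (A : Matrix (Fin m) (Fin n) ℝ) : Fin n → ℝ :=
  fun j => Real.sqrt ((Matrix.isHermitian_conjTranspose_mul_self A).eigenvalues j)

/-- Nuclear norm: sum of the singular values. -/
noncomputable def nuclearNorm {m n : ℕ} (A : Matrix (Fin m) (Fin n) ℝ) : ℝ :=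
  ∑ j, singVals A j

/-- Operator (spectral) norm: largest singular value. -/
noncomputable def opNorm {m n : ℕ} (A : Matrix (Fin m) (Fin n) ℝ) : ℝ :=
  ⨆ j, singVals A j

/-!
Comparing the objective at the minimiser with its value at the truth gives
`‖Δ₁ + X⊙Δ₂‖_F² ≤ 2⟨U, Δ₁⟩ + 2⟨X⊙U, Δ₂⟩ + ν₂ (‖M⁰‖ₙ - ‖M̃‖ₙ) + ν₁ (‖Θ⁰‖ₙ - ‖Θ̃‖ₙ)`.
The inner products are controlled by trace duality and the score conditions, the differences of
nuclear norms by decomposability: `𝓟₁(Δ₁)` has row and column spaces orthogonal to those of `M⁰`,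
so `‖M⁰ + 𝓟₁(Δ₁)‖ₙ = ‖M⁰‖ₙ + ‖𝓟₁(Δ₁)‖ₙ`.

Both nuclear-norm facts come from the polar factor `W = A V Σ⁺ Vᵀ` of `A`, a contraction with
`tr (Wᵀ A) = ‖A‖ₙ`. When `Aᵀ P = 0` and `A Pᵀ = 0` the polar factors of `A` and `P` have orthogonal
row and column spaces, so their sum is again a contraction and certifies `‖A‖ₙ + ‖P‖ₙ ≤ ‖A + P‖ₙ`.
-/

section Spectral

variable {m n : ℕ}

noncomputable def rightSingVecs (A : Matrix (Fin m) (Fin n) ℝ) : Matrix (Fin n) (Fin n) ℝ :=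
  (isHermitian_conjTranspose_mul_self A).eigenvectorUnitary

lemma rightSingVecs_conjTranspose_mul_self (A : Matrix (Fin m) (Fin n) ℝ) :
    (rightSingVecs A)ᴴ * rightSingVecs A = 1 :=
  Unitary.coe_star_mul_self (isHermitian_conjTranspose_mul_self A).eigenvectorUnitary

lemma rightSingVecs_mul_conjTranspose_self (A : Matrix (Fin m) (Fin n) ℝ) :
    rightSingVecs A * (rightSingVecs A)ᴴ = 1 :=
  Unitary.coe_mul_star_self (isHermitian_conjTranspose_mul_self A).eigenvectorUnitary

lemma singVals_nonneg (A : Matrix (Fin m) (Fin n) ℝ) (j : Fin n) : 0 ≤ singVals A j :=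
  Real.sqrt_nonneg _

lemma singVals_sq (A : Matrix (Fin m) (Fin n) ℝ) (j : Fin n) :
    singVals A j ^ 2 = (isHermitian_conjTranspose_mul_self A).eigenvalues j :=
  Real.sq_sqrt ((posSemidef_conjTranspose_mul_self A).eigenvalues_nonneg j)

lemma nuclearNorm_nonneg (A : Matrix (Fin m) (Fin n) ℝ) : 0 ≤ nuclearNorm A :=
  Finset.sum_nonneg fun j _ => singVals_nonneg A j

lemma singVals_le_opNorm (A : Matrix (Fin m) (Fin n) ℝ) (j : Fin n) : singVals A j ≤ opNorm A :=
  le_ciSup (Set.finite_range _).bddAbove j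

lemma opNorm_nonneg (A : Matrix (Fin m) (Fin n) ℝ) : 0 ≤ opNorm A :=
  Real.iSup_nonneg (singVals_nonneg A)

lemma conjTranspose_mul_self_mulVec_col (A : Matrix (Fin m) (Fin n) ℝ) (j : Fin n) :
    (Aᴴ * A) *ᵥ (rightSingVecs A)ᵀ j = singVals A j ^ 2 • (rightSingVecs A)ᵀ j := by
  rw [singVals_sq]
  exact (isHermitian_conjTranspose_mul_self A).mulVec_eigenvectorBasis j

noncomputable def conjDiag (A : Matrix (Fin m) (Fin n) ℝ) (f : Fin n → ℝ) :
    Matrix (Fin n) (Fin n) ℝ :=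
  rightSingVecs A * diagonal f * (rightSingVecs A)ᴴ

lemma conjTranspose_mul_self_eq_conjDiag (A : Matrix (Fin m) (Fin n) ℝ) :
    Aᴴ * A = conjDiag A (singVals A ^ 2) := by
  have h : singVals A ^ 2 = (isHermitian_conjTranspose_mul_self A).eigenvalues :=
    funext (singVals_sq A)
  rw [conjDiag, h]
  simpa [rightSingVecs, Matrix.star_eq_conjTranspose] using
    (isHermitian_conjTranspose_mul_self A).spectral_theorem

lemma conjDiag_mul_conjDiag (A : Matrix (Fin m) (Fin n) ℝ) (f g : Fin n → ℝ) :
    conjDiag A f * conjDiag A g = conjDiag A (f * g) := by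
  simp only [conjDiag, Matrix.mul_assoc]
  rw [← Matrix.mul_assoc (rightSingVecs A)ᴴ, rightSingVecs_conjTranspose_mul_self,
    Matrix.one_mul, ← Matrix.mul_assoc (diagonal f), diagonal_mul_diagonal]
  rfl

lemma conjTranspose_conjDiag (A : Matrix (Fin m) (Fin n) ℝ) (f : Fin n → ℝ) :
    (conjDiag A f)ᴴ = conjDiag A f := by
  simp [conjDiag, Matrix.mul_assoc]

lemma trace_conjDiag (A : Matrix (Fin m) (Fin n) ℝ) (f : Fin n → ℝ) :
    trace (conjDiag A f) = ∑ j, f j := by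
  rw [conjDiag, trace_mul_cycle, rightSingVecs_conjTranspose_mul_self, Matrix.one_mul,
    trace_diagonal]

end Spectral

section Duality

variable {m n : ℕ}

lemma conjTranspose_mul_apply_self (A B : Matrix (Fin m) (Fin n) ℝ) (j : Fin n) :
    (Aᴴ * B) j j = Aᵀ j ⬝ᵥ Bᵀ j := by
  simp [mul_apply, dotProduct]

lemma rightSingVecs_col_dotProduct_self (A : Matrix (Fin m) (Fin n) ℝ) (j : Fin n) :
    (rightSingVecs A)ᵀ j ⬝ᵥ (rightSingVecs A)ᵀ j = 1 := by
  rw [← conjTranspose_mul_apply_self, rightSingVecs_conjTranspose_mul_self, one_apply_eq]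

lemma mulVec_dotProduct_mulVec (A B : Matrix (Fin m) (Fin n) ℝ) (x y : Fin n → ℝ) :
    (A *ᵥ x) ⬝ᵥ (B *ᵥ y) = x ⬝ᵥ ((Aᴴ * B) *ᵥ y) := by
  rw [← mulVec_mulVec, conjTranspose_eq_transpose_of_trivial, dotProduct_mulVec x,
    vecMul_transpose]

lemma mul_rightSingVecs_conjTranspose_mul_self (A : Matrix (Fin m) (Fin n) ℝ) :
    (A * rightSingVecs A)ᴴ * (A * rightSingVecs A) = diagonal (singVals A ^ 2) := by
  rw [conjTranspose_mul, Matrix.mul_assoc, ← Matrix.mul_assoc Aᴴ,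
    conjTranspose_mul_self_eq_conjDiag, conjDiag]
  simp only [← Matrix.mul_assoc, rightSingVecs_conjTranspose_mul_self, Matrix.one_mul]
  rw [Matrix.mul_assoc, rightSingVecs_conjTranspose_mul_self, Matrix.mul_one]

lemma dotProduct_mulVec_self_le (B : Matrix (Fin m) (Fin n) ℝ) (x : Fin n → ℝ) :
    (B *ᵥ x) ⬝ᵥ (B *ᵥ x) ≤ opNorm B ^ 2 * (x ⬝ᵥ x) := by
  set V := rightSingVecs B
  set y := Vᴴ *ᵥ x
  have hx : x = V *ᵥ y := by
    rw [mulVec_mulVec, rightSingVecs_mul_conjTranspose_self, one_mulVec]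
  have hy : x ⬝ᵥ x = y ⬝ᵥ y := by
    rw [hx, mulVec_dotProduct_mulVec, rightSingVecs_conjTranspose_mul_self, one_mulVec]
  rw [hy, hx, mulVec_mulVec, mulVec_dotProduct_mulVec, mul_rightSingVecs_conjTranspose_mul_self,
    dotProduct, dotProduct, Finset.mul_sum]
  refine Finset.sum_le_sum fun k _ => ?_
  rw [mulVec_diagonal, Pi.pow_apply]
  have hk : singVals B k ^ 2 ≤ opNorm B ^ 2 :=
    pow_le_pow_left₀ (singVals_nonneg B k) (singVals_le_opNorm B k) 2
  nlinarith [mul_self_nonneg (y k)]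

lemma trace_conjTranspose_mul_comm (A B : Matrix (Fin m) (Fin n) ℝ) :
    trace (Aᴴ * B) = trace (Bᴴ * A) := by
  rw [← trace_transpose, transpose_mul, conjTranspose_eq_transpose_of_trivial,
    conjTranspose_eq_transpose_of_trivial, transpose_transpose]

lemma trace_conjTranspose_mul_eq_sum (A B : Matrix (Fin m) (Fin n) ℝ)
    {V : Matrix (Fin n) (Fin n) ℝ} (hV : V * Vᴴ = 1) :
    trace (Aᴴ * B) = ∑ j, (A * V)ᵀ j ⬝ᵥ (B * V)ᵀ j := by
  have h : trace ((A * V)ᴴ * (B * V)) = trace (Aᴴ * B) := by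
    rw [conjTranspose_mul, Matrix.mul_assoc, trace_mul_comm, Matrix.mul_assoc,
      Matrix.mul_assoc, hV, Matrix.mul_one]
  rw [← h, trace]
  exact Finset.sum_congr rfl fun j _ => conjTranspose_mul_apply_self _ _ j

lemma abs_trace_conjTranspose_mul_le (A B : Matrix (Fin m) (Fin n) ℝ) :
    |trace (Aᴴ * B)| ≤ nuclearNorm A * opNorm B := by
  set V := rightSingVecs A
  have hA : ∀ j, (A * V)ᵀ j ⬝ᵥ (A * V)ᵀ j = singVals A j ^ 2 := fun j => by
    rw [← conjTranspose_mul_apply_self, mul_rightSingVecs_conjTranspose_mul_self,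
      diagonal_apply_eq, Pi.pow_apply]
  have hB : ∀ j, (B * V)ᵀ j ⬝ᵥ (B * V)ᵀ j ≤ opNorm B ^ 2 := fun j => by
    have hv : Vᵀ j ⬝ᵥ Vᵀ j = 1 := rightSingVecs_col_dotProduct_self A j
    have hcol : (B * V)ᵀ j = B *ᵥ Vᵀ j := by
      ext i; simp [mul_apply, mulVec, dotProduct]
    simpa [hv, hcol] using dotProduct_mulVec_self_le B (Vᵀ j)
  rw [trace_conjTranspose_mul_eq_sum A B (rightSingVecs_mul_conjTranspose_self A), nuclearNorm,
    Finset.sum_mul]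
  refine (Finset.abs_sum_le_sum_abs _ _).trans (Finset.sum_le_sum fun j _ => ?_)
  refine abs_le_of_sq_le_sq ?_ (mul_nonneg (singVals_nonneg A j) (opNorm_nonneg B))
  calc ((A * V)ᵀ j ⬝ᵥ (B * V)ᵀ j) ^ 2
      ≤ ((A * V)ᵀ j ⬝ᵥ (A * V)ᵀ j) * ((B * V)ᵀ j ⬝ᵥ (B * V)ᵀ j) := by
        simpa only [dotProduct, sq] using
          Finset.sum_mul_sq_le_sq_mul_sq _ ((A * V)ᵀ j) ((B * V)ᵀ j)
    _ ≤ singVals A j ^ 2 * opNorm B ^ 2 := by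
        rw [hA]; exact mul_le_mul_of_nonneg_left (hB j) (sq_nonneg _)
    _ = (singVals A j * opNorm B) ^ 2 := (mul_pow _ _ _).symm

end Duality

section PolarFactor

variable {m n : ℕ}

lemma opNorm_le_one_of_idempotent {B : Matrix (Fin m) (Fin n) ℝ}
    (h : (Bᴴ * B) * (Bᴴ * B) = Bᴴ * B) : opNorm B ≤ 1 := by
  refine Real.iSup_le (fun j => ?_) zero_le_one
  set v := (rightSingVecs B)ᵀ j
  have hv := conjTranspose_mul_self_mulVec_col B j
  have hs : (singVals B j ^ 2) * (singVals B j ^ 2) = singVals B j ^ 2 := by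
    have := congrArg (fun H => v ⬝ᵥ (H *ᵥ v)) h
    simpa only [← mulVec_mulVec, hv, mulVec_smul, smul_smul, dotProduct_smul,
      rightSingVecs_col_dotProduct_self, v, smul_eq_mul, mul_one] using this
  have hsq : singVals B j ^ 2 ≤ 1 := by nlinarith [sq_nonneg (singVals B j)]
  exact (pow_le_one_iff_of_nonneg (singVals_nonneg B j) two_ne_zero).1 hsq

-- Since `0⁻¹ = 0`, only the nonzero singular values are inverted: this is `A V Σ⁺ Vᵀ`.
noncomputable def polarFactor (A : Matrix (Fin m) (Fin n) ℝ) : Matrix (Fin m) (Fin n) ℝ :=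
  A * conjDiag A (singVals A)⁻¹

noncomputable def rowSpaceProj (A : Matrix (Fin m) (Fin n) ℝ) : Matrix (Fin n) (Fin n) ℝ :=
  conjDiag A (singVals A * (singVals A)⁻¹)

lemma conjTranspose_polarFactor (A : Matrix (Fin m) (Fin n) ℝ) :
    (polarFactor A)ᴴ = conjDiag A (singVals A)⁻¹ * Aᴴ := by
  rw [polarFactor, conjTranspose_mul, conjTranspose_conjDiag]

lemma conjTranspose_polarFactor_mul_self (A : Matrix (Fin m) (Fin n) ℝ) :
    (polarFactor A)ᴴ * A = conjDiag A (singVals A) := by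
  rw [conjTranspose_polarFactor, Matrix.mul_assoc, conjTranspose_mul_self_eq_conjDiag,
    conjDiag_mul_conjDiag]
  congr 1
  funext j
  simp [sq, ← mul_assoc, inv_mul_mul_self]

lemma trace_conjTranspose_polarFactor_mul_self (A : Matrix (Fin m) (Fin n) ℝ) :
    trace ((polarFactor A)ᴴ * A) = nuclearNorm A := by
  rw [conjTranspose_polarFactor_mul_self, trace_conjDiag, nuclearNorm]

lemma conjTranspose_polarFactor_mul_polarFactor (A : Matrix (Fin m) (Fin n) ℝ) :
    (polarFactor A)ᴴ * polarFactor A = rowSpaceProj A := by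
  rw [polarFactor, ← Matrix.mul_assoc, ← polarFactor, conjTranspose_polarFactor_mul_self,
    conjDiag_mul_conjDiag, rowSpaceProj]

lemma rowSpaceProj_mul_self (A : Matrix (Fin m) (Fin n) ℝ) :
    rowSpaceProj A * rowSpaceProj A = rowSpaceProj A := by
  rw [rowSpaceProj, conjDiag_mul_conjDiag]
  congr 1
  funext j
  rcases eq_or_ne (singVals A j) 0 with h | h <;> simp [h]

lemma opNorm_polarFactor_le_one (A : Matrix (Fin m) (Fin n) ℝ) : opNorm (polarFactor A) ≤ 1 :=
  opNorm_le_one_of_idempotent <| by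
    rw [conjTranspose_polarFactor_mul_polarFactor, rowSpaceProj_mul_self]

lemma rowSpaceProj_eq_conjDiag_mul (A : Matrix (Fin m) (Fin n) ℝ) :
    rowSpaceProj A = conjDiag A ((singVals A)⁻¹ ^ 2) * (Aᴴ * A) := by
  rw [conjTranspose_mul_self_eq_conjDiag, conjDiag_mul_conjDiag, rowSpaceProj]
  congr 1
  funext j
  rcases eq_or_ne (singVals A j) 0 with h | h <;> simp [h]

lemma rowSpaceProj_eq_mul_conjDiag (A : Matrix (Fin m) (Fin n) ℝ) :
    rowSpaceProj A = (Aᴴ * A) * conjDiag A ((singVals A)⁻¹ ^ 2) := by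
  rw [conjTranspose_mul_self_eq_conjDiag, conjDiag_mul_conjDiag, rowSpaceProj]
  congr 1
  funext j
  rcases eq_or_ne (singVals A j) 0 with h | h <;> simp [h]

end PolarFactor

section NuclearNorm

variable {m n : ℕ}

lemma abs_trace_conjTranspose_mul_le_nuclearNorm {W : Matrix (Fin m) (Fin n) ℝ}
    (hW : opNorm W ≤ 1) (A : Matrix (Fin m) (Fin n) ℝ) :
    |trace (Wᴴ * A)| ≤ nuclearNorm A := by
  rw [trace_conjTranspose_mul_comm]
  exact (abs_trace_conjTranspose_mul_le A W).trans
    (mul_le_of_le_one_right (nuclearNorm_nonneg A) hW)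

lemma nuclearNorm_add_le (A B : Matrix (Fin m) (Fin n) ℝ) :
    nuclearNorm (A + B) ≤ nuclearNorm A + nuclearNorm B := by
  have hW := abs_trace_conjTranspose_mul_le_nuclearNorm (opNorm_polarFactor_le_one (A + B))
  rw [← trace_conjTranspose_polarFactor_mul_self, Matrix.mul_add, trace_add]
  linarith [le_abs_self (trace ((polarFactor (A + B))ᴴ * A)),
    le_abs_self (trace ((polarFactor (A + B))ᴴ * B)), hW A, hW B]

lemma nuclearNorm_sub_le (A B : Matrix (Fin m) (Fin n) ℝ) :
    nuclearNorm (A - B) ≤ nuclearNorm A + nuclearNorm B := by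
  have hW := abs_trace_conjTranspose_mul_le_nuclearNorm (opNorm_polarFactor_le_one (A - B))
  rw [← trace_conjTranspose_polarFactor_mul_self, Matrix.mul_sub, trace_sub]
  linarith [le_abs_self (trace ((polarFactor (A - B))ᴴ * A)),
    neg_abs_le (trace ((polarFactor (A - B))ᴴ * B)), hW A, hW B]

lemma conjTranspose_polarFactor_mul_eq_zero {A P : Matrix (Fin m) (Fin n) ℝ}
    (h : Aᴴ * P = 0) : (polarFactor A)ᴴ * P = 0 := by
  rw [conjTranspose_polarFactor, Matrix.mul_assoc, h, Matrix.mul_zero]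

lemma conjTranspose_polarFactor_mul_polarFactor_eq_zero {A P : Matrix (Fin m) (Fin n) ℝ}
    (h : Aᴴ * P = 0) : (polarFactor A)ᴴ * polarFactor P = 0 := by
  rw [polarFactor.eq_1 P, ← Matrix.mul_assoc, conjTranspose_polarFactor_mul_eq_zero h,
    Matrix.zero_mul]

lemma rowSpaceProj_mul_rowSpaceProj_eq_zero {A P : Matrix (Fin m) (Fin n) ℝ}
    (h : A * Pᴴ = 0) : rowSpaceProj A * rowSpaceProj P = 0 := by
  rw [rowSpaceProj_eq_conjDiag_mul, rowSpaceProj_eq_mul_conjDiag]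
  simp only [Matrix.mul_assoc]
  rw [← Matrix.mul_assoc A, h, Matrix.zero_mul, Matrix.mul_zero, Matrix.mul_zero]

lemma nuclearNorm_add_of_orthogonal {A P : Matrix (Fin m) (Fin n) ℝ}
    (h₁ : Aᴴ * P = 0) (h₂ : A * Pᴴ = 0) :
    nuclearNorm (A + P) = nuclearNorm A + nuclearNorm P := by
  have h₁' : Pᴴ * A = 0 := by simpa using congrArg conjTranspose h₁
  have h₂' : P * Aᴴ = 0 := by simpa using congrArg conjTranspose h₂
  set W := polarFactor A + polarFactor P
  have hWW : Wᴴ * W = rowSpaceProj A + rowSpaceProj P := by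
    rw [conjTranspose_add, Matrix.add_mul, Matrix.mul_add, Matrix.mul_add,
      conjTranspose_polarFactor_mul_polarFactor_eq_zero h₁,
      conjTranspose_polarFactor_mul_polarFactor_eq_zero h₁',
      conjTranspose_polarFactor_mul_polarFactor, conjTranspose_polarFactor_mul_polarFactor]
    abel
  have hidem : (Wᴴ * W) * (Wᴴ * W) = Wᴴ * W := by
    rw [hWW, Matrix.add_mul, Matrix.mul_add, Matrix.mul_add,
      rowSpaceProj_mul_rowSpaceProj_eq_zero h₂, rowSpaceProj_mul_rowSpaceProj_eq_zero h₂',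
      rowSpaceProj_mul_self, rowSpaceProj_mul_self, add_zero, zero_add]
  have htr : trace (Wᴴ * (A + P)) = nuclearNorm A + nuclearNorm P := by
    rw [conjTranspose_add, Matrix.add_mul, Matrix.mul_add, Matrix.mul_add,
      conjTranspose_polarFactor_mul_eq_zero h₁, conjTranspose_polarFactor_mul_eq_zero h₁',
      add_zero, zero_add, trace_add, trace_conjTranspose_polarFactor_mul_self,
      trace_conjTranspose_polarFactor_mul_self]
  refine le_antisymm (nuclearNorm_add_le A P) ?_
  rw [← htr]
  exact (le_abs_self _).trans
    (abs_trace_conjTranspose_mul_le_nuclearNorm (opNorm_le_one_of_idempotent hidem) _)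

end NuclearNorm

section BasicInequality

variable {m n : ℕ}

noncomputable def frobInner (A B : Matrix (Fin m) (Fin n) ℝ) : ℝ :=
  ∑ i, ∑ j, A i j * B i j

lemma frobSq_sub (A B : Matrix (Fin m) (Fin n) ℝ) :
    frobSq (A - B) = frobSq A - 2 * frobInner A B + frobSq B := by
  simp only [frobSq, frobInner, Finset.mul_sum, ← Finset.sum_sub_distrib,
    ← Finset.sum_add_distrib, Matrix.sub_apply]
  exact Finset.sum_congr rfl fun i _ => Finset.sum_congr rfl fun j _ => by ring

lemma frobInner_add_hadamard (S A X B : Matrix (Fin m) (Fin n) ℝ) :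
    frobInner S (A + X ⊙ B) = frobInner S A + frobInner (X ⊙ S) B := by
  simp only [frobInner, ← Finset.sum_add_distrib, Matrix.add_apply, hadamard_apply]
  exact Finset.sum_congr rfl fun i _ => Finset.sum_congr rfl fun j _ => by ring

lemma frobInner_eq_trace (A B : Matrix (Fin m) (Fin n) ℝ) : frobInner A B = trace (Aᴴ * B) := by
  rw [frobInner, Finset.sum_comm]
  exact Finset.sum_congr rfl fun j _ => (conjTranspose_mul_apply_self A B j).symm

lemma frobInner_le (S Δ : Matrix (Fin m) (Fin n) ℝ) :
    frobInner S Δ ≤ opNorm S * nuclearNorm Δ := by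
  rw [frobInner_eq_trace, trace_conjTranspose_mul_comm, mul_comm]
  exact (le_abs_self _).trans (abs_trace_conjTranspose_mul_le Δ S)

lemma conjTranspose_mul_sandwich_eq_zero {k l : ℕ} {A : Matrix (Fin m) (Fin n) ℝ}
    {U : Matrix (Fin m) (Fin k) ℝ} (hU : Uᵀ * A = 0) (Δ : Matrix (Fin m) (Fin n) ℝ)
    (V : Matrix (Fin n) (Fin l) ℝ) : Aᴴ * (U * Uᵀ * Δ * (V * Vᵀ)) = 0 := by
  have hAU : Aᴴ * U = 0 := by
    simpa [conjTranspose_eq_transpose_of_trivial, transpose_mul] using congrArg transpose hU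
  simp only [← Matrix.mul_assoc, hAU, Matrix.zero_mul]

lemma mul_conjTranspose_sandwich_eq_zero {k l : ℕ} {A : Matrix (Fin m) (Fin n) ℝ}
    {V : Matrix (Fin n) (Fin l) ℝ} (hV : A * V = 0) (U : Matrix (Fin m) (Fin k) ℝ)
    (Δ : Matrix (Fin m) (Fin n) ℝ) : A * (U * Uᵀ * Δ * (V * Vᵀ))ᴴ = 0 := by
  simp only [conjTranspose_eq_transpose_of_trivial, transpose_mul, transpose_transpose,
    ← Matrix.mul_assoc, hV, Matrix.zero_mul]

lemma two_mul_frobInner_add_nuclearNorm_sub_le {S A P Δ : Matrix (Fin m) (Fin n) ℝ} {c ν : ℝ}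
    (hν : 0 ≤ ν) (hS : 2 * opNorm S ≤ (1 - c) * ν) (h₁ : Aᴴ * P = 0) (h₂ : A * Pᴴ = 0) :
    2 * frobInner S Δ + ν * (nuclearNorm A - nuclearNorm (A + Δ)) ≤
      (2 - c) * ν * nuclearNorm (Δ - P) - c * ν * nuclearNorm P := by
  have hΔ : nuclearNorm Δ ≤ nuclearNorm P + nuclearNorm (Δ - P) := by
    simpa using nuclearNorm_add_le P (Δ - P)
  have hdec : nuclearNorm A + nuclearNorm P ≤ nuclearNorm (A + Δ) + nuclearNorm (Δ - P) := by
    rw [← nuclearNorm_add_of_orthogonal h₁ h₂]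
    convert nuclearNorm_sub_le (A + Δ) (Δ - P) using 2
    abel
  have hscore : 2 * frobInner S Δ ≤ (1 - c) * ν * (nuclearNorm P + nuclearNorm (Δ - P)) :=
    calc 2 * frobInner S Δ ≤ 2 * opNorm S * nuclearNorm Δ := by
          linarith [frobInner_le S Δ]
      _ ≤ (1 - c) * ν * nuclearNorm Δ := by gcongr; exact nuclearNorm_nonneg Δ
      _ ≤ (1 - c) * ν * (nuclearNorm P + nuclearNorm (Δ - P)) :=
          mul_le_mul_of_nonneg_left hΔ ((mul_nonneg zero_le_two (opNorm_nonneg S)).trans hS)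
  linarith [mul_le_mul_of_nonneg_left hdec hν]

end BasicInequality

theorem stmt11_general {N T k₁ l₁ k₂ l₂ : ℕ}
    (Y X U M0 Θ0 Mt Θt : Matrix (Fin N) (Fin T) ℝ)
    (U1c : Matrix (Fin N) (Fin k₁) ℝ) (V1c : Matrix (Fin T) (Fin l₁) ℝ)
    (U2c : Matrix (Fin N) (Fin k₂) ℝ) (V2c : Matrix (Fin T) (Fin l₂) ℝ)
    (c ν₁ ν₂ : ℝ) (hν₁ : 0 < ν₁) (hν₂ : 0 < ν₂)
    (hU1M : U1cᵀ * M0 = 0) (hMV1 : M0 * V1c = 0)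
    (hU2Θ : U2cᵀ * Θ0 = 0) (hΘV2 : Θ0 * V2c = 0)
    (hY : Y = M0 + X ⊙ Θ0 + U)
    (hscoreU : 2 * opNorm U < (1 - c) * ν₂)
    (hscoreXU : 2 * opNorm (X ⊙ U) < (1 - c) * ν₁)
    (hmin : ∀ M Θ : Matrix (Fin N) (Fin T) ℝ,
      frobSq (Y - Mt - X ⊙ Θt) + ν₂ * nuclearNorm Mt + ν₁ * nuclearNorm Θt ≤
        frobSq (Y - M - X ⊙ Θ) + ν₂ * nuclearNorm M + ν₁ * nuclearNorm Θ) :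
    frobSq ((Mt - M0) + X ⊙ (Θt - Θ0))
        + c * ν₂ * nuclearNorm (U1c * U1cᵀ * (Mt - M0) * (V1c * V1cᵀ))
        + c * ν₁ * nuclearNorm (U2c * U2cᵀ * (Θt - Θ0) * (V2c * V2cᵀ))
      ≤ (2 - c) * ν₂ * nuclearNorm ((Mt - M0) - U1c * U1cᵀ * (Mt - M0) * (V1c * V1cᵀ))
        + (2 - c) * ν₁ * nuclearNorm ((Θt - Θ0) - U2c * U2cᵀ * (Θt - Θ0) * (V2c * V2cᵀ)) := by
  have hfit : Y - Mt - X ⊙ Θt = U - ((Mt - M0) + X ⊙ (Θt - Θ0)) := by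
    rw [hY, ← add_sub_cancel Θ0 Θt, hadamard_add, add_sub_cancel_left]
    abel
  have hopt := hmin M0 Θ0
  rw [hfit, show Y - M0 - X ⊙ Θ0 = U by rw [hY]; abel, frobSq_sub,
    frobInner_add_hadamard] at hopt
  have hM := two_mul_frobInner_add_nuclearNorm_sub_le (Δ := Mt - M0) hν₂.le hscoreU.le
    (conjTranspose_mul_sandwich_eq_zero hU1M (Mt - M0) V1c)
    (mul_conjTranspose_sandwich_eq_zero hMV1 U1c (Mt - M0))
  have hΘ := two_mul_frobInner_add_nuclearNorm_sub_le (Δ := Θt - Θ0) hν₁.le hscoreXU.le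
    (conjTranspose_mul_sandwich_eq_zero hU2Θ (Θt - Θ0) V2c)
    (mul_conjTranspose_sandwich_eq_zero hΘV2 U2c (Θt - Θ0))
  rw [add_sub_cancel] at hM hΘ
  linarith

/-- basic inequality for the doubly nuclear-norm penalized regression.
`Y = M⁰ + X⊙Θ⁰ + U`; `(M̃, Θ̃)` minimizes
`F(Θ, M) = ‖Y − M − X⊙Θ‖_F² + ν₂‖M‖ₙ + ν₁‖Θ‖ₙ`; the scores are dominated:
`2‖U‖_op < (1−c)ν₂` and `2‖X⊙U‖_op < (1−c)ν₁`. With `𝓟ⱼ(Δ) = U_{j,c}U_{j,c}ᵀ Δ V_{j,c}V_{j,c}ᵀ`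
built from the singular vectors of `M⁰` (j = 1) and `Θ⁰` (j = 2) corresponding to zero singular
values, and `𝓜ⱼ(Δ) = Δ − 𝓟ⱼ(Δ)`, the error matrices `Δ₁ = M̃ − M⁰`, `Δ₂ = Θ̃ − Θ⁰` satisfy the
basic inequality. -/
theorem stmt11 {N T k₁ l₁ k₂ l₂ : ℕ}
    (Y X U M0 Θ0 Mt Θt : Matrix (Fin N) (Fin T) ℝ)
    (U1c : Matrix (Fin N) (Fin k₁) ℝ) (V1c : Matrix (Fin T) (Fin l₁) ℝ)
    (U2c : Matrix (Fin N) (Fin k₂) ℝ) (V2c : Matrix (Fin T) (Fin l₂) ℝ)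
    (c ν₁ ν₂ : ℝ) (hc : 0 < c) (hν₁ : 0 < ν₁) (hν₂ : 0 < ν₂)
    (hU1c : U1cᵀ * U1c = 1) (hV1c : V1cᵀ * V1c = 1)
    (hU1M : U1cᵀ * M0 = 0) (hMV1 : M0 * V1c = 0)
    (hU2c : U2cᵀ * U2c = 1) (hV2c : V2cᵀ * V2c = 1)
    (hU2Θ : U2cᵀ * Θ0 = 0) (hΘV2 : Θ0 * V2c = 0)
    (hY : Y = M0 + X ⊙ Θ0 + U)
    (hscoreU : 2 * opNorm U < (1 - c) * ν₂)
    (hscoreXU : 2 * opNorm (X ⊙ U) < (1 - c) * ν₁)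
    (hmin : ∀ M Θ : Matrix (Fin N) (Fin T) ℝ,
      frobSq (Y - Mt - X ⊙ Θt) + ν₂ * nuclearNorm Mt + ν₁ * nuclearNorm Θt ≤
        frobSq (Y - M - X ⊙ Θ) + ν₂ * nuclearNorm M + ν₁ * nuclearNorm Θ) :
    frobSq ((Mt - M0) + X ⊙ (Θt - Θ0))
        + c * ν₂ * nuclearNorm (U1c * U1cᵀ * (Mt - M0) * (V1c * V1cᵀ))
        + c * ν₁ * nuclearNorm (U2c * U2cᵀ * (Θt - Θ0) * (V2c * V2cᵀ))
      ≤ (2 - c) * ν₂ * nuclearNorm ((Mt - M0) - U1c * U1cᵀ * (Mt - M0) * (V1c * V1cᵀ))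
        + (2 - c) * ν₁ * nuclearNorm ((Θt - Θ0) - U2c * U2cᵀ * (Θt - Θ0) * (V2c * V2cᵀ)) :=
  stmt11_general Y X U M0 Θ0 Mt Θt U1c V1c U2c V2c c ν₁ ν₂ hν₁ hν₂ hU1M hMV1 hU2Θ hΘV2 hY hscoreU
    hscoreXU hmin
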